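/- Let G = S∞ be the group of all permutations of ℤ, equipped with the topology of pointwise convergence, and let H = {σ ∈ G | σ is strictly increasing for the usual order on ℤ} be the stabilizer of the usual order, i.e., the group of translations of ℤ. Then the pair (G,H) is maximally relatively extremely amenable: (G,H) is relatively extremely amenable, and for every subgroup H' of G with H ⊆ H' such that (G,H') is relatively extremely amenable, one has H' = H. -/

import Mathlib

/-- A topological group `G` is *extremely amenable* if every continuous action of `G`
on a nonempty compact Hausdorff space has a `G`-fixed point. -/
def ExtremelyAmenable (G : Type) [Group G] [TopologicalSpace G] : Prop :=
  ∀ (X : Type) [TopologicalSpace X] [CompactSpace X] [T2Space X] [Nonempty X]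
    [MulAction G X] [ContinuousSMul G X], ∃ x : X, ∀ g : G, g • x = x

/-- The pair `(G, H)` is *relatively extremely amenable* if every continuous action of `G`
on a nonempty compact Hausdorff space has a point fixed by every element of `H`. -/
def RelativelyExtremelyAmenable (G : Type) [Group G] [TopologicalSpace G] (H : Subgroup G) :
    Prop :=
  ∀ (X : Type) [TopologicalSpace X] [CompactSpace X] [T2Space X] [Nonempty X]
    [MulAction G X] [ContinuousSMul G X], ∃ x : X, ∀ h ∈ H, h • x = x
/-- The topology of pointwise convergence on the permutation group of a set `α`
(`α` being given the discrete topology): the topology induced by the embedding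
`σ ↦ (σ, σ⁻¹)` into `(α → α) × (α → α)`. -/
def permPointwiseTopology (α : Type) : TopologicalSpace (Equiv.Perm α) :=
  letI : TopologicalSpace α := ⊥
  TopologicalSpace.induced
    (fun σ : Equiv.Perm α => ((⇑σ, ⇑σ.symm) : (α → α) × (α → α))) inferInstance

/-- The subgroup of the permutation group of a linear order `α` consisting of the
permutations that are strictly increasing. -/
def strictMonoPerms (α : Type) [LinearOrder α] : Subgroup (Equiv.Perm α) where
  carrier := {σ : Equiv.Perm α | StrictMono ⇑σ}
  one_mem' := fun _ _ h => h
  mul_mem' := fun ha hb _ _ h => ha (hb h)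
  inv_mem' := by
    intro a ha x y hxy
    have h := ha.lt_iff_lt (a := a⁻¹ x) (b := a⁻¹ y)
    rw [Equiv.Perm.inv_def, Equiv.apply_symm_apply, Equiv.apply_symm_apply] at h
    exact h.mp hxy

noncomputable instance : TopologicalSpace (Equiv.Perm ℤ) := permPointwiseTopology ℤ

/-!
Translations of `ℤ` are the powers of `τ = (· + 1)`, so for relative extreme amenability it
suffices that `τ` fixes a point of every compact `S∞`-flow `X`. If it did not, compactness would
give a finite colouring of `X` and a neighbourhood `N` of `1` with `g • x ≠ τ • y` whenever `x`
and `y` have the same colour and `g ∈ N`; `N` contains the pointwise stabiliser of an interval.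
Colouring a permutation `σ` by the colour of `σ • x₀`, the infinite Ramsey theorem yields `σ, σ'`
of the same colour such that `τ σ' σ⁻¹` fixes that interval, and `(τ σ' σ⁻¹) • σ • x₀ = τ • σ' • x₀`
is the contradiction.

For maximality, a subgroup `H' ⊇ H` fixes a point of the compact flow of linear orders on `ℤ`.
That order is invariant under translations, so it is `≤` or `≥`, and every element of `H'`
preserves it, i.e. is strictly increasing.
-/

open Equiv Topology Filter

section PermTopology

variable {α : Type}

attribute [local instance] permPointwiseTopology

theorem isOpen_setOf_perm_inv_apply_eq (a b : α) : IsOpen {σ : Perm α | σ⁻¹ a = b} := by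
  let _ : TopologicalSpace α := ⊥
  have : DiscreteTopology α := ⟨rfl⟩
  have h : Continuous fun p : (α → α) × (α → α) => p.2 a :=
    (continuous_apply a).comp continuous_snd
  exact isOpen_induced <| (isOpen_discrete {b}).preimage h

theorem exists_finset_fixing_subset_of_mem_nhds_one {U : Set (Perm α)} (hU : U ∈ 𝓝 1) :
    ∃ F : Finset α, {σ : Perm α | ∀ a ∈ F, σ a = a} ⊆ U := by
  let _ : TopologicalSpace α := ⊥
  let φ : Perm α → (α → α) × (α → α) := fun σ => (σ, σ.symm)
  obtain ⟨T, hT, hTU⟩ := (nhds_induced φ 1 ▸ hU : U ∈ comap φ (𝓝 (id, id)))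
  rw [nhds_prod_eq] at hT
  obtain ⟨T₁, hT₁, T₂, hT₂, hT⟩ := mem_prod_iff.mp hT
  rw [nhds_pi, mem_pi] at hT₁ hT₂
  obtain ⟨I₁, hI₁, t₁, ht₁, hsub₁⟩ := hT₁
  obtain ⟨I₂, hI₂, t₂, ht₂, hsub₂⟩ := hT₂
  classical
  refine ⟨hI₁.toFinset ∪ hI₂.toFinset, fun σ hσ =>
    hTU (hT ⟨hsub₁ fun a ha => ?_, hsub₂ fun a ha => ?_⟩)⟩
  · have : σ a = a := hσ a (by simp [ha])
    simpa [φ, this] using mem_of_mem_nhds (ht₁ a)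
  · have : σ⁻¹ a = a := Perm.inv_eq_iff_eq.mpr (hσ a (by simp [ha])).symm
    simpa [φ, ← Perm.inv_def, this] using mem_of_mem_nhds (ht₂ a)

end PermTopology

section Coloring

variable {G X : Type*} [Monoid G] [TopologicalSpace G] [TopologicalSpace X] [MulAction G X]
  [ContinuousSMul G X]

theorem exists_nhds_forall_smul_ne_of_ne [T2Space X] {g₀ : G} {x : X} (hx : g₀ • x ≠ x) :
    ∃ W ∈ 𝓝 x, ∃ N ∈ 𝓝 (1 : G), ∀ g ∈ N, ∀ y ∈ W, ∀ y' ∈ W, g • y ≠ g₀ • y' := by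
  obtain ⟨U, V, hU, hV, hxU, hxV, hUV⟩ := t2_separation hx
  have hcont : ContinuousAt (fun p : G × X => p.1 • p.2) (1, x) := continuous_smul.continuousAt
  obtain ⟨N, hN, B, hB, hNB⟩ := mem_nhds_prod_iff.mp <| hcont.preimage_mem_nhds <|
    hV.mem_nhds (by simpa using hxV)
  refine ⟨B ∩ (g₀ • ·) ⁻¹' U,
    inter_mem hB ((hU.preimage (continuous_const_smul g₀)).mem_nhds hxU), N, hN,
    fun g hg y hy y' hy' => (hUV.ne_of_mem hy'.2 (hNB (Set.mk_mem_prod hg hy.1))).symm⟩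

theorem exists_finite_coloring_forall_smul_ne [CompactSpace X] [T2Space X] {g₀ : G}
    (hg₀ : ∀ x : X, g₀ • x ≠ x) :
    ∃ (s : Finset X) (col : X → s), ∃ N ∈ 𝓝 (1 : G),
      ∀ x y, col x = col y → ∀ g ∈ N, g • x ≠ g₀ • y := by
  choose W hW N hN hWN using fun x => exists_nhds_forall_smul_ne_of_ne (hg₀ x)
  obtain ⟨s, -, hs⟩ := isCompact_univ.elim_nhds_subcover W fun x _ => hW x
  have hcol : ∀ x, ∃ z : s, x ∈ W z := fun x => by simpa using hs (Set.mem_univ x)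
  choose col hcol using hcol
  refine ⟨s, col, ⋂ z ∈ s, N z, (biInter_finset_mem s).mpr fun z _ => hN z,
    fun x y hxy g hg => hWN (col x) g (Set.mem_iInter₂.mp hg _ (col x).2) x (hcol x) y ?_⟩
  exact hxy ▸ hcol y

end Coloring

section Ramsey

theorem exists_infinite_monochromatic {ι : Type*} [Finite ι] :
    ∀ (m : ℕ) (c : (Fin m → ℕ) → ι) {S : Set ℕ}, S.Infinite →
      ∃ M ⊆ S, M.Infinite ∧ ∃ i, ∀ f : Fin m → ℕ, StrictMono f → Set.range f ⊆ M → c f = i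
  | 0, c, S, hS =>
    ⟨S, subset_rfl, hS, c Fin.elim0, fun f _ _ => congrArg c (Subsingleton.elim _ _)⟩
  | m + 1, c, S, hS => by
    -- Each stage fixes the least element `sInf T` of the current set as the first entry.
    have step : ∀ T : {T : Set ℕ // T.Infinite}, ∃ T' : {T' : Set ℕ // T'.Infinite}, ∃ i,
        T'.1 ⊆ T.1 ∧ (∀ x ∈ T'.1, sInf T.1 < x) ∧
        ∀ g : Fin m → ℕ, StrictMono g → Set.range g ⊆ T'.1 → c (Fin.cons (sInf T.1) g) = i := by
      rintro ⟨T, hT⟩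
      obtain ⟨M, hMT, hM, i, hi⟩ := exists_infinite_monochromatic m
        (fun g => c (Fin.cons (sInf T) g)) (hT.sdiff (Set.finite_Iic (sInf T)))
      exact ⟨⟨M, hM⟩, i, fun x hx => (hMT hx).1, fun x hx => not_le.mp (hMT hx).2, hi⟩
    choose next color hsub hgt hcol using step
    let T : ℕ → {T : Set ℕ // T.Infinite} := fun n => next^[n] ⟨S, hS⟩
    have hT_succ : ∀ n, T (n + 1) = next (T n) := fun n => Function.iterate_succ_apply' _ _ _
    have hT_anti : Antitone fun n => (T n).1 :=
      antitone_nat_of_succ_le fun n => hT_succ n ▸ hsub _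
    let a : ℕ → ℕ := fun n => sInf (T n).1
    have ha_mem : ∀ n, a n ∈ (T n).1 := fun n => Nat.sInf_mem (T n).2.nonempty
    have ha_mono : StrictMono a :=
      strictMono_nat_of_lt_succ fun n => hgt (T n) _ (hT_succ n ▸ ha_mem (n + 1))
    obtain ⟨j, hj⟩ := Finite.exists_infinite_fiber fun n => color (T n)
    refine ⟨a '' (fun n => color (T n)) ⁻¹' {j}, ?_,
      (Set.infinite_coe_iff.mp hj).image ha_mono.injective.injOn, j, fun f hf hfM => ?_⟩
    · rintro _ ⟨n, -, rfl⟩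
      exact hT_anti (Nat.zero_le n) (ha_mem n)
    obtain ⟨n, hn, hfn⟩ := hfM ⟨0, rfl⟩
    have htail : Set.range (Fin.tail f) ⊆ (T (n + 1)).1 := by
      rintro _ ⟨k, rfl⟩
      obtain ⟨l, -, hfl⟩ := hfM ⟨k.succ, rfl⟩
      have hnl : n < l := ha_mono.lt_iff_lt.mp (hfn.trans_lt (hfl ▸ hf (Fin.succ_pos k)))
      have hfl_mem := ha_mem l
      rw [hfl] at hfl_mem
      exact hT_anti hnl hfl_mem
    have hcol_f := hcol (T n) (Fin.tail f) (hf.comp Fin.strictMono_succ) (hT_succ n ▸ htail)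
    rw [show sInf (T n).1 = f 0 from hfn, Fin.cons_self_tail] at hcol_f
    exact hcol_f.trans hn

theorem exists_strictMono_castSucc_succ_same_color {ι : Type*} [Finite ι] (m : ℕ)
    (c : (Fin m → ℕ) → ι) :
    ∃ e : Fin (m + 1) → ℕ, StrictMono e ∧ c (e ∘ Fin.castSucc) = c (e ∘ Fin.succ) := by
  obtain ⟨M, -, hM, i, hi⟩ := exists_infinite_monochromatic m c Set.infinite_univ
  let e : Fin (m + 1) → ℕ := fun k => Nat.nth (· ∈ M) k
  have he : StrictMono e := (Nat.nth_strictMono hM).comp Fin.val_strictMono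
  have heM : ∀ g : Fin m → Fin (m + 1), Set.range (e ∘ g) ⊆ M := fun g =>
    (Set.range_comp_subset_range g e).trans
      (Set.range_subset_iff.mpr fun k => Nat.nth_mem_of_infinite hM k)
  exact ⟨e, he, (hi _ (he.comp Fin.strictMono_castSucc) (heM _)).trans
    (hi _ (he.comp Fin.strictMono_succ) (heM _)).symm⟩

end Ramsey

section OrbitSegment

variable {α : Type*} [Infinite α]

theorem Equiv.Perm.exists_apply_eq_of_injective {k : ℕ} {u v : Fin k → α}
    (hu : Function.Injective u) (hv : Function.Injective v) :
    ∃ σ : Perm α, ∀ i, σ (u i) = v i := by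
  let f : Set.range u ↪ α := (Equiv.ofInjective u hu).symm.toEmbedding.trans ⟨v, hv⟩
  have hlt : Cardinal.mk (Set.range u) < Cardinal.mk α :=
    (Set.finite_range u).lt_aleph0.trans_le (Cardinal.aleph0_le_mk α)
  obtain ⟨σ, hσ⟩ := Cardinal.extend_function_of_lt f hlt ⟨Equiv.refl α⟩
  exact ⟨σ, fun i => (hσ ⟨u i, i, rfl⟩).trans (by simp [f])⟩

theorem Equiv.Perm.exists_same_color_of_orbit_segment {ι : Type*} [Finite ι]
    (c : Perm α → ι) (τ : Perm α) {k : ℕ} {t : Fin (k + 1) → α} (ht : Function.Injective t)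
    (hτ : ∀ j : Fin k, τ (t j.castSucc) = t j.succ) :
    ∃ σ σ' : Perm α, c σ = c σ' ∧ ∀ j : Fin k, (τ * σ' * σ⁻¹) (t j.succ) = t j.succ := by
  let ι₀ := Infinite.natEmbedding α
  -- `ρ A` sends the `i`-th entry of an increasing tuple `A` to `t i`; colour `A` by `c (ρ A)`.
  have hρ : ∀ A : Fin (k + 1) → ℕ, ∃ ρ : Perm α, StrictMono A → ∀ i, ρ (ι₀ (A i)) = t i := by
    intro A
    by_cases hA : StrictMono A
    · obtain ⟨ρ, hρ⟩ := exists_apply_eq_of_injective (ι₀.injective.comp hA.injective) ht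
      exact ⟨ρ, fun _ => hρ⟩
    · exact ⟨1, fun h => (hA h).elim⟩
  choose ρ hρ using hρ
  obtain ⟨e, he, hce⟩ := exists_strictMono_castSucc_succ_same_color (k + 1) fun A => c (ρ A)
  refine ⟨ρ (e ∘ Fin.castSucc), ρ (e ∘ Fin.succ), hce, fun j => ?_⟩
  have h₁ : (ρ (e ∘ Fin.castSucc))⁻¹ (t j.succ) = ι₀ (e j.castSucc.succ) := by
    rw [Perm.inv_eq_iff_eq, ← hρ _ (he.comp Fin.strictMono_castSucc) j.succ, Fin.succ_castSucc]
    rfl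
  have h₂ : ρ (e ∘ Fin.succ) (ι₀ (e j.castSucc.succ)) = t j.castSucc :=
    hρ _ (he.comp Fin.strictMono_succ) j.castSucc
  rw [Perm.mul_apply, Perm.mul_apply, h₁, h₂, hτ]

end OrbitSegment

theorem Int.perm_apply_eq_add_apply_zero {σ : Perm ℤ} (hσ : StrictMono σ) (n : ℤ) :
    σ n = n + σ 0 := by
  have hsucc : ∀ n, σ (n + 1) = σ n + 1 := fun n => by
    simpa [Order.succ_eq_add_one] using (hσ.orderIsoOfSurjective σ σ.surjective).map_succ n
  induction n using Int.induction_on with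
  | zero => simp
  | succ n ih => rw [hsucc, ih]; ring
  | pred n ih =>
    have h := hsucc (-(n : ℤ) - 1)
    rw [sub_add_cancel] at h
    linarith

theorem strictMonoPerms_int_le_zpowers :
    strictMonoPerms ℤ ≤ Subgroup.zpowers (Equiv.addRight 1) := by
  intro σ hσ
  refine ⟨σ 0, ?_⟩
  ext n
  simp [Equiv.zsmul_addRight, Int.perm_apply_eq_add_apply_zero hσ n]

theorem Int.exists_fin_cover (F : Finset ℤ) :
    ∃ (d : ℤ) (k : ℕ), ∀ a ∈ F, ∃ j : Fin k, a = d + j + 1 := by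
  set n : ℕ := F.sup Int.natAbs
  refine ⟨-n - 1, 2 * n + 1, fun a ha => ?_⟩
  have : a.natAbs ≤ n := Finset.le_sup (f := Int.natAbs) ha
  exact ⟨⟨(a + n).toNat, by omega⟩, by simp only [Int.ofNat_toNat]; omega⟩

theorem exists_addRight_one_smul_eq (X : Type*) [TopologicalSpace X] [CompactSpace X]
    [T2Space X] [Nonempty X] [MulAction (Perm ℤ) X] [ContinuousSMul (Perm ℤ) X] :
    ∃ x : X, Equiv.addRight (1 : ℤ) • x = x := by
  by_contra! h
  obtain ⟨s, col, N, hN, hcol⟩ := exists_finite_coloring_forall_smul_ne h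
  obtain ⟨F, hF⟩ := exists_finset_fixing_subset_of_mem_nhds_one hN
  obtain ⟨d, k, hFdk⟩ := Int.exists_fin_cover F
  obtain ⟨x₀⟩ := ‹Nonempty X›
  obtain ⟨σ, σ', hc, hfix⟩ := Perm.exists_same_color_of_orbit_segment
    (fun σ => col (σ • x₀)) (Equiv.addRight 1) (t := fun i : Fin (k + 1) => d + i)
    (fun i j hij => Fin.ext (by simpa using hij)) (fun j => by
      simp only [Fin.val_castSucc, coe_addRight, Fin.val_succ, Nat.cast_add, Nat.cast_one]; ring)
  refine hcol _ _ hc (Equiv.addRight 1 * σ' * σ⁻¹) (hF fun a ha => ?_) ?_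
  · obtain ⟨j, rfl⟩ := hFdk a ha
    simpa [add_assoc] using hfix j
  · rw [smul_smul, smul_smul, inv_mul_cancel_right]

theorem relativelyExtremelyAmenable_strictMonoPerms_int :
    RelativelyExtremelyAmenable (Perm ℤ) (strictMonoPerms ℤ) := by
  intro X _ _ _ _ _ _
  obtain ⟨x, hx⟩ := exists_addRight_one_smul_eq X
  exact ⟨x, fun h hh => MulAction.mem_stabilizer_iff.mp <| Subgroup.zpowers_le.mpr
    (MulAction.mem_stabilizer_iff.mpr hx) (strictMonoPerms_int_le_zpowers hh)⟩

section LinearOrderRels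

variable {α : Type}

def IsLinearOrderRel (r : α → α → Bool) : Prop :=
  (∀ a b, r a b ∨ r b a) ∧ (∀ a b, r a b → r b a → a = b) ∧
    ∀ a b c, r a b → r b c → r a c

abbrev LinearOrderRels (α : Type) := {r : α → α → Bool // IsLinearOrderRel r}

theorem isClosed_setOf_isLinearOrderRel :
    IsClosed {r : α → α → Bool | IsLinearOrderRel r} := by
  have h : ∀ a b, IsClopen {r : α → α → Bool | r a b} := fun a b =>
    (isClopen_discrete {true}).preimage ((continuous_apply b).comp (continuous_apply a))
  simp only [IsLinearOrderRel, Set.ofPred_and, Set.ofPred_forall, Set.ofPred_or]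
  refine (isClosed_iInter fun a => isClosed_iInter fun b =>
      (h a b).isClosed.union (h b a).isClosed).inter
    ((isClosed_iInter fun a => isClosed_iInter fun b => ?_).inter
      (isClosed_iInter fun a => isClosed_iInter fun b => isClosed_iInter fun c => ?_))
  · exact isClosed_imp (h a b).isOpen (isClosed_imp (h b a).isOpen isClosed_const)
  · exact isClosed_imp (h a b).isOpen (isClosed_imp (h b c).isOpen (h a c).isClosed)

instance : CompactSpace (LinearOrderRels α) :=
  isCompact_iff_compactSpace.mp isClosed_setOf_isLinearOrderRel.isCompact

instance [LinearOrder α] : Nonempty (LinearOrderRels α) :=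
  ⟨⟨fun a b => decide (a ≤ b), fun a b => by simpa using le_total a b,
    fun _ _ hab hba => le_antisymm (of_decide_eq_true hab) (of_decide_eq_true hba),
    fun _ _ _ hab hbc => decide_eq_true ((of_decide_eq_true hab).trans (of_decide_eq_true hbc))⟩⟩

instance : MulAction (Perm α) (LinearOrderRels α) where
  smul σ r := ⟨fun a b => r.1 (σ⁻¹ a) (σ⁻¹ b), fun _ _ => r.2.1 _ _,
    fun _ _ hab hba => σ⁻¹.injective (r.2.2.1 _ _ hab hba), fun _ _ _ => r.2.2.2 _ _ _⟩
  one_smul _ := rfl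
  mul_smul _ _ _ := rfl

@[simp]
theorem LinearOrderRels.smul_apply (σ : Perm α) (r : LinearOrderRels α) (a b : α) :
    (σ • r).1 a b = r.1 (σ⁻¹ a) (σ⁻¹ b) := rfl

attribute [local instance] permPointwiseTopology

instance : ContinuousSMul (Perm α) (LinearOrderRels α) where
  continuous_smul := by
    let _ : TopologicalSpace α := ⊥
    have : DiscreteTopology α := ⟨rfl⟩
    have heval : Continuous fun p : (α → α → Bool) × (α × α) => p.1 p.2.1 p.2.2 :=
      continuous_prod_of_discrete_right.mpr fun q =>
        (continuous_apply q.2).comp (continuous_apply q.1)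
    have hinv (a : α) : Continuous fun σ : Perm α => σ⁻¹ a :=
      continuous_discrete_rng.mpr (isOpen_setOf_perm_inv_apply_eq a)
    refine Continuous.subtype_mk (continuous_pi fun a => continuous_pi fun b => ?_) _
    exact heval.comp ((continuous_subtype_val.comp continuous_snd).prodMk
      (((hinv a).comp continuous_fst).prodMk ((hinv b).comp continuous_fst)))

theorem IsLinearOrderRel.swap {r : α → α → Bool} (hr : IsLinearOrderRel r) :
    IsLinearOrderRel (Function.swap r) :=
  ⟨fun a b => hr.1 b a, fun a b hab hba => hr.2.1 a b hba hab,
    fun a b c hab hbc => hr.2.2 c b a hbc hab⟩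

theorem strictMono_of_preserves_le_or_ge [LinearOrder α] {r : α → α → Bool}
    (hr : (∀ a b, r a b ↔ a ≤ b) ∨ ∀ a b, r a b ↔ b ≤ a) {σ : α → α}
    (hσ : ∀ a b, r (σ a) (σ b) = r a b) : StrictMono σ := by
  refine strictMono_of_le_iff_le fun a b => ?_
  rcases hr with hr | hr
  · rw [← hr, ← hr, hσ]
  · rw [← hr, ← hr, hσ]

end LinearOrderRels

theorem IsLinearOrderRel.int_iff_le {r : ℤ → ℤ → Bool} (hr : IsLinearOrderRel r)
    (hsucc : ∀ a, r a (a + 1)) (a b : ℤ) : r a b ↔ a ≤ b := by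
  have hle : ∀ a b, a ≤ b → r a b := fun a b hab =>
    Int.leInduction ((hr.1 a a).elim id id) (fun n _ ih => hr.2.2 _ _ _ ih (hsucc n)) b hab
  exact ⟨fun hab => not_lt.mp fun hba => hba.ne (hr.2.1 _ _ (hle b a hba.le) hab), hle a b⟩

theorem IsLinearOrderRel.int_iff_le_or_iff_ge {r : ℤ → ℤ → Bool} (hr : IsLinearOrderRel r)
    (hr_add : ∀ k a b, r (a + k) (b + k) = r a b) :
    (∀ a b, r a b ↔ a ≤ b) ∨ ∀ a b, r a b ↔ b ≤ a := by
  by_cases h01 : r 0 1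
  · exact .inl (hr.int_iff_le fun a => by simpa [add_comm] using (hr_add a 0 1).trans h01)
  · have h10 : r 1 0 := (hr.1 0 1).resolve_left h01
    refine .inr fun a b => hr.swap.int_iff_le (fun a => ?_) b a
    simpa [Function.swap, add_comm] using (hr_add a 1 0).trans h10

theorem addRight_mem_strictMonoPerms_int (k : ℤ) : Equiv.addRight k ∈ strictMonoPerms ℤ :=
  fun _ _ h => by simpa using h

theorem eq_strictMonoPerms_int_of_relativelyExtremelyAmenable {H : Subgroup (Perm ℤ)}
    (hle : strictMonoPerms ℤ ≤ H) (hH : RelativelyExtremelyAmenable (Perm ℤ) H) :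
    H = strictMonoPerms ℤ := by
  obtain ⟨r, hr⟩ := hH (LinearOrderRels ℤ)
  have hfix : ∀ σ ∈ H, ∀ a b, r.1 (σ a) (σ b) = r.1 a b := fun σ hσ a b => by
    simpa using congrArg (fun r : LinearOrderRels ℤ => r.1 a b) (hr σ⁻¹ (inv_mem hσ))
  have hr_add : ∀ k a b, r.1 (a + k) (b + k) = r.1 a b := fun k =>
    hfix _ (hle (addRight_mem_strictMonoPerms_int k))
  exact le_antisymm (fun σ hσ => strictMono_of_preserves_le_or_ge
    (r.2.int_iff_le_or_iff_ge hr_add) (hfix σ hσ)) hle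

/-- For `S∞` the permutation group of `ℤ` with the topology of pointwise convergence and
`H` the subgroup of strictly increasing permutations (the stabilizer of the usual order,
i.e. the translations), the pair `(S∞, H)` is maximally relatively extremely amenable. -/
theorem maximally_relativelyExtremelyAmenable_permInt_strictMono :
    RelativelyExtremelyAmenable (Equiv.Perm ℤ) (strictMonoPerms ℤ) ∧
      ∀ H' : Subgroup (Equiv.Perm ℤ), strictMonoPerms ℤ ≤ H' →
        RelativelyExtremelyAmenable (Equiv.Perm ℤ) H' → H' = strictMonoPerms ℤ :=
  ⟨relativelyExtremelyAmenable_strictMonoPerms_int,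
    fun _ => eq_strictMonoPerms_int_of_relativelyExtremelyAmenable⟩
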